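/- arXiv:1412.4800 — 2 statements merged into one kernel-verified Lean document; each statement's English description precedes it below -/
import Mathlib

section
/- Let A and C be groups and B a subgroup contained both in the centre Z(A) and in the centre Z(C), and form the free product with amalgamation A *_B C. If h ∈ A with h ∉ B, and g ∈ A *_B C with g ∉ A, then the commutator g·h·g⁻¹·h⁻¹ ∉ A. -/
/-!
Through its universal property `P` embeds into the amalgamated product `Monoid.PushoutI`
of `A` and `C` over `B`, sending `A` onto the first factor, so the normal form theorem is
available. It gives: if `x ∈ A \ B` and `g x g⁻¹ ∈ A`, then `g ∈ A`; the claim follows because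
`g h g⁻¹ = [g, h] h`. Write `g = a w` with `a ∈ A` and `w` a reduced word whose first letter is
not in `A`. Letters of `A` at the right end of `w` can be peeled off by conjugating `x`, which
stays outside `B` since `B` is normal in `A`. If a nonempty `w` with both end letters outside `A`
were left, with `w x w⁻¹ = b ∈ A`, then the reduced word `w x w⁻¹` (if `b ∈ B`) or
`w x w⁻¹ b⁻¹` (if `b ∉ B`) would be nonempty with value in `B`, which the normal form forbids.
-/

universe u

/-- `P` is the free product of its subgroups `A` and `C` with amalgamated central
subgroup `B` (i.e. the cocone of inclusions satisfies the universal property of the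
pushout of the two inclusions `B → A` and `B → C`). -/
structure IsCentralAmalgam {P : Type u} [Group P] (A C B : Subgroup P) : Prop where
  B_le_A : B ≤ A
  B_le_C : B ≤ C
  central_A : ∀ b ∈ B, ∀ a ∈ A, b * a = a * b
  central_C : ∀ b ∈ B, ∀ c ∈ C, b * c = c * b
  isPushout : ∀ (K : Type u) [Group K] (f : ↥A →* K) (g : ↥C →* K),
      (∀ (b : P) (hb : b ∈ B), f ⟨b, B_le_A hb⟩ = g ⟨b, B_le_C hb⟩) →
      ∃! φ : P →* K, φ.comp A.subtype = f ∧ φ.comp C.subtype = g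

namespace Monoid.PushoutI

open List

variable {ι : Type*} {G : ι → Type*} [∀ i, Group (G i)] {H : Type*} [Group H]
  {φ : ∀ i, H →* G i}

variable (φ) in
def listProd (L : List (Σ i, G i)) : PushoutI φ :=
  (L.map fun l => of l.1 l.2).prod

@[simp] theorem listProd_nil : listProd φ [] = 1 := rfl

@[simp] theorem listProd_append (L₁ L₂ : List (Σ i, G i)) :
    listProd φ (L₁ ++ L₂) = listProd φ L₁ * listProd φ L₂ := by
  simp [listProd]

@[simp] theorem listProd_cons (l : Σ i, G i) (L : List (Σ i, G i)) :
    listProd φ (l :: L) = of l.1 l.2 * listProd φ L := by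
  simp [listProd]

def invList (L : List (Σ i, G i)) : List (Σ i, G i) :=
  L.reverse.map fun l => ⟨l.1, l.2⁻¹⟩

@[simp] theorem listProd_invList (L : List (Σ i, G i)) :
    listProd φ (invList L) = (listProd φ L)⁻¹ := by
  induction L with
  | nil => rfl
  | cons l L ih => simp [invList, ← ih]

theorem head?_invList (L : List (Σ i, G i)) :
    (invList L).head? = L.getLast?.map fun l => ⟨l.1, l.2⁻¹⟩ := by
  simp [invList, head?_reverse]

theorem getLast?_invList (L : List (Σ i, G i)) :
    (invList L).getLast? = L.head?.map fun l => ⟨l.1, l.2⁻¹⟩ := by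
  simp [invList, getLast?_reverse]

variable (φ) in
structure IsReducedList (L : List (Σ i, G i)) : Prop where
  isChain : L.IsChain fun l l' => l.1 ≠ l'.1
  notMem_range : ∀ l ∈ L, l.2 ∉ (φ l.1).range

namespace IsReducedList

theorem singleton {i : ι} {x : G i} (hx : x ∉ (φ i).range) : IsReducedList φ [⟨i, x⟩] :=
  ⟨isChain_singleton _, by simpa using hx⟩

theorem of_infix {L₁ L : List (Σ i, G i)} (hL : IsReducedList φ L) (h : L₁ <:+: L) :
    IsReducedList φ L₁ :=
  ⟨hL.isChain.infix h, fun l hl => hL.notMem_range l (h.subset hl)⟩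

theorem append {L₁ L₂ : List (Σ i, G i)} (h₁ : IsReducedList φ L₁) (h₂ : IsReducedList φ L₂)
    (h : ∀ a ∈ L₁.getLast?, ∀ b ∈ L₂.head?, a.1 ≠ b.1) : IsReducedList φ (L₁ ++ L₂) :=
  ⟨isChain_append.2 ⟨h₁.isChain, h₂.isChain, h⟩, fun l hl =>
    (mem_append.1 hl).elim (h₁.notMem_range l) (h₂.notMem_range l)⟩

theorem invList {L : List (Σ i, G i)} (hL : IsReducedList φ L) :
    IsReducedList φ (invList L) := by
  refine ⟨?_, ?_⟩
  · exact isChain_map _ |>.2 <| isChain_reverse.2 <| hL.isChain.imp fun _ _ h => Ne.symm h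
  · simp only [PushoutI.invList, mem_map, mem_reverse]
    rintro _ ⟨l, hl, rfl⟩
    simpa using hL.notMem_range l hl

end IsReducedList

theorem ofCoprodI_prod_eq_listProd (w : CoprodI.Word G) :
    ofCoprodI (φ := φ) w.prod = listProd φ w.toList := by
  simp [CoprodI.Word.prod, listProd, map_list_prod, Function.comp_def]

theorem listProd_notMem_range_base (hφ : ∀ i, Function.Injective (φ i))
    {L : List (Σ i, G i)} (hL : IsReducedList φ L) (hne : L ≠ []) :
    listProd φ L ∉ (base φ).range := by
  intro hmem
  let w : CoprodI.Word G :=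
    ⟨L, fun l hl h1 => hL.notMem_range l hl (h1 ▸ one_mem _), hL.isChain⟩
  have hw : Reduced φ w := hL.notMem_range
  exact hne (congrArg CoprodI.Word.toList
    (hw.eq_empty_of_mem_range hφ (ofCoprodI_prod_eq_listProd (φ := φ) w ▸ hmem)))

theorem listProd_notMem_range_of_last_ne (hφ : ∀ i, Function.Injective (φ i)) {i : ι}
    {L : List (Σ i, G i)} (hL : IsReducedList φ L) (hne : L ≠ [])
    (hlast : ∀ l ∈ L.getLast?, l.1 ≠ i) : listProd φ L ∉ (of (φ := φ) i).range := by
  rintro ⟨b, hb⟩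
  by_cases hbφ : b ∈ (φ i).range
  · obtain ⟨k, rfl⟩ := hbφ
    exact listProd_notMem_range_base hφ hL hne ⟨k, by rw [← hb, of_apply_eq_base]⟩
  · have hL' : IsReducedList φ (L ++ [⟨i, b⁻¹⟩]) :=
      hL.append (.singleton (φ := φ) (x := b⁻¹) (by simpa using hbφ)) (by simpa using hlast)
    refine listProd_notMem_range_base hφ hL' (by simp) ⟨1, ?_⟩
    simp [← hb]

theorem listProd_conj_notMem_range (hφ : ∀ i, Function.Injective (φ i)) {i : ι}
    {L : List (Σ i, G i)} (hL : IsReducedList φ L) (hne : L ≠ [])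
    (hhead : ∀ l ∈ L.head?, l.1 ≠ i) (hlast : ∀ l ∈ L.getLast?, l.1 ≠ i)
    {x : G i} (hx : x ∉ (φ i).range) :
    listProd φ L * of i x * (listProd φ L)⁻¹ ∉ (of (φ := φ) i).range := by
  have hM : IsReducedList φ (L ++ [(⟨i, x⟩ : Σ i, G i)] ++ invList L) := by
    refine (hL.append (.singleton hx) (by simpa using hlast)).append hL.invList ?_
    intro a ha b hb
    rw [head?_invList, Option.mem_map] at hb
    obtain ⟨l, hl, rfl⟩ := hb
    simp only [getLast?_append, getLast?_singleton, Option.some_or, Option.mem_def,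
      Option.some_inj] at ha
    exact ha ▸ (hlast l hl).symm
  have hlast' : ∀ l ∈ (L ++ [(⟨i, x⟩ : Σ i, G i)] ++ invList L).getLast?, l.1 ≠ i := by
    intro l hl
    rw [getLast?_append_of_ne_nil _ (by simpa [invList] using hne), getLast?_invList,
      Option.mem_map] at hl
    obtain ⟨l', hl', rfl⟩ := hl
    exact hhead l' hl'
  have := listProd_notMem_range_of_last_ne hφ hM (by simp) hlast'
  simpa [mul_assoc] using this

theorem eq_nil_of_listProd_conj_mem_range (hφ : ∀ i, Function.Injective (φ i)) {i : ι}
    (hN : (φ i).range.Normal) {L : List (Σ i, G i)} (hL : IsReducedList φ L)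
    (hhead : ∀ l ∈ L.head?, l.1 ≠ i) {x : G i} (hx : x ∉ (φ i).range)
    (hconj : listProd φ L * of i x * (listProd φ L)⁻¹ ∈ (of (φ := φ) i).range) : L = [] := by
  induction L using List.reverseRecOn generalizing x with
  | nil => rfl
  | append_singleton L c ih =>
    exfalso
    obtain ⟨j, t⟩ := c
    by_cases hj : j = i
    · subst hj
      have hnil : L = [] :=
        ih (hL.of_infix (prefix_append _ _).isInfix)
          (fun l hl => hhead l (by rw [Option.mem_def] at hl ⊢; simp [head?_append, hl]))
          (x := t * x * t⁻¹) (fun h => hx (by simpa [mul_assoc] using hN.conj_mem _ h t⁻¹))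
          (by simpa [mul_assoc] using hconj)
      subst hnil
      simp at hhead
    · exact listProd_conj_notMem_range hφ hL (by simp) hhead (by simp [hj]) hx hconj

theorem exists_eq_base_mul_listProd (hφ : ∀ i, Function.Injective (φ i)) (g : PushoutI φ) :
    ∃ k L, IsReducedList φ L ∧ g = base φ k * listProd φ L := by
  classical
  obtain ⟨d⟩ := NormalWord.transversal_nonempty φ hφ
  let w : NormalWord d := NormalWord.equiv g
  refine ⟨w.head, w.toList, ⟨w.chain_ne, ?_⟩, ?_⟩
  · rintro ⟨j, y⟩ hl hy
    apply w.ne_one _ hl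
    have h := (d.compl j).equiv_snd_eq_self_of_mem_of_one_mem (one_mem _) (w.normalized j y hl)
    rw [(d.compl j).equiv_snd_eq_one_of_mem_of_one_mem (d.one_mem j) hy] at h
    exact congrArg Subtype.val h.symm
  · rw [← ofCoprodI_prod_eq_listProd]
    exact (NormalWord.equiv.symm_apply_apply g).symm

theorem exists_eq_of_mul_listProd (hφ : ∀ i, Function.Injective (φ i)) (i : ι)
    (g : PushoutI φ) : ∃ (a : G i) (L : List (Σ i, G i)), IsReducedList φ L ∧
      (∀ l ∈ L.head?, l.1 ≠ i) ∧ g = of i a * listProd φ L := by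
  obtain ⟨k, L, hL, rfl⟩ := exists_eq_base_mul_listProd hφ g
  rw [← of_apply_eq_base φ i k]
  cases L with
  | nil => exact ⟨φ i k, [], hL, by simp, rfl⟩
  | cons l L =>
    by_cases hl : l.1 = i
    · obtain ⟨j, y⟩ := l
      subst hl
      refine ⟨φ j k * y, L, hL.of_infix (suffix_cons _ _).isInfix,
        fun l' hl' => Ne.symm ((isChain_cons.1 hL.isChain).1 l' hl'), by simp [mul_assoc]⟩
    · exact ⟨φ i k, l :: L, hL, by simpa using hl, rfl⟩

theorem mem_range_of_conj_mem_range (hφ : ∀ i, Function.Injective (φ i)) {i : ι}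
    (hN : (φ i).range.Normal) {x : G i} (hx : x ∉ (φ i).range) {g : PushoutI φ}
    (hg : g * of i x * g⁻¹ ∈ (of (φ := φ) i).range) : g ∈ (of (φ := φ) i).range := by
  obtain ⟨a, L, hL, hhead, rfl⟩ := exists_eq_of_mul_listProd hφ i g
  have hconj : listProd φ L * of i x * (listProd φ L)⁻¹ ∈ (of (φ := φ) i).range := by
    have ha : of i a ∈ (of (φ := φ) i).range := ⟨a, rfl⟩
    simpa [mul_assoc] using mul_mem (mul_mem (inv_mem ha) hg) ha
  rw [eq_nil_of_listProd_conj_mem_range hφ hN hL hhead hx hconj, listProd_nil, mul_one]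
  exact ⟨a, rfl⟩

end Monoid.PushoutI

namespace IsCentralAmalgam

open Monoid PushoutI

variable {P : Type u} [Group P] {A C B : Subgroup P}

def incl (hAm : IsCentralAmalgam A C B) (b : Bool) : B →* ↥(cond b A C : Subgroup P) :=
  Subgroup.inclusion (by cases b; exacts [hAm.B_le_C, hAm.B_le_A])

theorem incl_injective (hAm : IsCentralAmalgam A C B) (b : Bool) :
    Function.Injective (hAm.incl b) :=
  Subgroup.inclusion_injective _

theorem normal_range_incl_true (hAm : IsCentralAmalgam A C B) :
    (hAm.incl true).range.Normal where
  conj_mem := by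
    rintro _ ⟨k, rfl⟩ a
    refine ⟨k, Subtype.ext ?_⟩
    simp [incl, ← hAm.central_A k k.2 a a.2]

theorem of_true_eq_of_false (hAm : IsCentralAmalgam A C B) (b : P) (hb : b ∈ B) :
    of (φ := hAm.incl) true ⟨b, hAm.B_le_A hb⟩ = of false ⟨b, hAm.B_le_C hb⟩ :=
  (of_apply_eq_base hAm.incl true ⟨b, hb⟩).trans (of_apply_eq_base hAm.incl false ⟨b, hb⟩).symm

noncomputable def toPushoutI (hAm : IsCentralAmalgam A C B) : P →* PushoutI hAm.incl :=
  (hAm.isPushout _ (of (φ := hAm.incl) true) (of (φ := hAm.incl) false)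
    hAm.of_true_eq_of_false).exists.choose

theorem toPushoutI_comp_subtype (hAm : IsCentralAmalgam A C B) :
    hAm.toPushoutI.comp A.subtype = of (φ := hAm.incl) true ∧
      hAm.toPushoutI.comp C.subtype = of (φ := hAm.incl) false :=
  (hAm.isPushout _ (of (φ := hAm.incl) true) (of (φ := hAm.incl) false)
    hAm.of_true_eq_of_false).exists.choose_spec

theorem toPushoutI_apply_of_mem (hAm : IsCentralAmalgam A C B) {a : P} (ha : a ∈ A) :
    hAm.toPushoutI a = of (φ := hAm.incl) true ⟨a, ha⟩ :=
  DFunLike.congr_fun hAm.toPushoutI_comp_subtype.1 ⟨a, ha⟩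

theorem toPushoutI_injective (hAm : IsCentralAmalgam A C B) :
    Function.Injective hAm.toPushoutI := by
  let π : PushoutI hAm.incl →* P :=
    lift (fun b => (cond b A C : Subgroup P).subtype) B.subtype fun b => by cases b <;> rfl
  have hπ : π.comp hAm.toPushoutI = MonoidHom.id P := by
    refine (hAm.isPushout P A.subtype C.subtype fun _ _ => rfl).unique ⟨?_, ?_⟩ ⟨rfl, rfl⟩
    · rw [MonoidHom.comp_assoc, hAm.toPushoutI_comp_subtype.1]
      ext a; simp [π]
    · rw [MonoidHom.comp_assoc, hAm.toPushoutI_comp_subtype.2]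
      ext c; simp [π]
  exact Function.LeftInverse.injective (DFunLike.congr_fun hπ)

theorem toPushoutI_mem_range_iff (hAm : IsCentralAmalgam A C B) {g : P} :
    hAm.toPushoutI g ∈ (of (φ := hAm.incl) true).range ↔ g ∈ A := by
  refine ⟨?_, fun hg => ⟨⟨g, hg⟩, (hAm.toPushoutI_apply_of_mem hg).symm⟩⟩
  rintro ⟨a, ha⟩
  rw [← hAm.toPushoutI_apply_of_mem a.2] at ha
  exact hAm.toPushoutI_injective ha ▸ a.2

theorem mem_of_conj_mem (hAm : IsCentralAmalgam A C B) {h g : P} (hhA : h ∈ A) (hhB : h ∉ B)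
    (hg : g * h * g⁻¹ ∈ A) : g ∈ A := by
  have hx : (⟨h, hhA⟩ : A) ∉ (hAm.incl true).range := by
    rintro ⟨k, hk⟩
    have hkh : (k : P) = h := congrArg Subtype.val hk
    exact hhB (hkh ▸ k.2)
  rw [← hAm.toPushoutI_mem_range_iff] at hg ⊢
  rw [map_mul, map_mul, map_inv, hAm.toPushoutI_apply_of_mem hhA] at hg
  exact mem_range_of_conj_mem_range hAm.incl_injective hAm.normal_range_incl_true hx hg

end IsCentralAmalgam

/-- If `h ∈ A`, `h ∉ B` and `g ∉ A`, then `g * h * g⁻¹ * h⁻¹ ∉ A`. -/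
theorem commutator_not_mem_of_isCentralAmalgam {P : Type u} [Group P]
    {A C B : Subgroup P} (hAm : IsCentralAmalgam A C B)
    {h : P} (hhA : h ∈ A) (hhB : h ∉ B) {g : P} (hgA : g ∉ A) :
    g * h * g⁻¹ * h⁻¹ ∉ A :=
  fun hq => hgA (hAm.mem_of_conj_mem hhA hhB (by simpa using mul_mem hq hhA))
end

section
/- In the setting of the iterated central amalgamation: if a subgroup H of G is spread out, then its commutator subgroup H' is itself spread out. -/
/-!
If `B` is central (hence normal) in `A`, then `A` is malnormal modulo `B` in `A *_B C`: for
`y ∉ A` and `a ∈ A \ B`, the conjugate `y a y⁻¹` is not in `A`. Indeed, absorbing the letters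
of `y⁻¹` that lie in `A` into `a`, the conjugate becomes `w⁻¹ a' w` with `w` a reduced word
not starting in `A` and `a' ∈ A \ B`, a reduced word of length at least three, whereas elements
of `A` have normal form of length at most one.

Now suppose `H' ≤ G_n` and pick `h ∈ H \ G_n`, say `h ∈ G_p` with `p ≥ n`. If some `y ∈ H`
were outside `G_p`, then `y h y⁻¹ = [y, h] h ∈ G_p`; taking the `m ≥ p` with
`y ∈ G_{m+1} \ G_m`, malnormality in `G_{m+1} = G_m *_{B_m} H_{m+1}` gives
`h ∈ B_m ≤ B_n ≤ G_n`, a contradiction. Hence `H ≤ G_p`, contradicting that `H` is spread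
out.
-/

universe u

/-- The subgroup `D` of `G` is the free product of its subgroups `A` and `C` with
amalgamated central subgroup `B`: the cocone of inclusions satisfies the universal
property of the pushout of the two inclusions `B → A` and `B → C`. -/
structure IsCentralAmalgamIn {G : Type u} [Group G] (A C B D : Subgroup G) : Prop where
  A_le : A ≤ D
  C_le : C ≤ D
  B_le_A : B ≤ A
  B_le_C : B ≤ C
  central_A : ∀ b ∈ B, ∀ a ∈ A, b * a = a * b
  central_C : ∀ b ∈ B, ∀ c ∈ C, b * c = c * b
  isPushout : ∀ (K : Type u) [Group K] (f : ↥A →* K) (g : ↥C →* K),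
      (∀ (b : G) (hb : b ∈ B), f ⟨b, B_le_A hb⟩ = g ⟨b, B_le_C hb⟩) →
      ∃! φ : ↥D →* K,
        φ.comp (Subgroup.inclusion A_le) = f ∧ φ.comp (Subgroup.inclusion C_le) = g

/-- The setting of the iterated central amalgamation
`G = ⋃_n (H₀ *_{B₀} H₁ *_{B₁} ⋯ *_{B_{n-1}} H_n)`:
`B₀ ⊇ B₁ ⊇ ⋯` is a descending sequence of groups with `⋂_n B_n = 1`; for each `n`,
`B_n` is a central subgroup of both `H_n` and `H_{n+1}` with `B_n ≠ H_n` and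
`B_n ≠ H_{n+1}`; `G₀ = H₀`, `G_{n+1} = G_n *_{B_n} H_{n+1}` (free product with central
amalgamation) and `G = ⋃_n G_n`.  All groups are realized as subgroups of `G`. -/
structure IteratedAmalgam (G : Type u) [Group G] where
  Gn : ℕ → Subgroup G
  Hn : ℕ → Subgroup G
  Bn : ℕ → Subgroup G
  B_antitone : ∀ n, Bn (n + 1) ≤ Bn n
  B_iInf : ⨅ n, Bn n = ⊥
  B_le_H : ∀ n, Bn n ≤ Hn n
  B_le_H_succ : ∀ n, Bn n ≤ Hn (n + 1)
  B_central_H : ∀ n, ∀ b ∈ Bn n, ∀ h ∈ Hn n, b * h = h * b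
  B_central_H_succ : ∀ n, ∀ b ∈ Bn n, ∀ h ∈ Hn (n + 1), b * h = h * b
  B_ne_H : ∀ n, Bn n ≠ Hn n
  B_ne_H_succ : ∀ n, Bn n ≠ Hn (n + 1)
  G_zero : Gn 0 = Hn 0
  amalgam : ∀ n, IsCentralAmalgamIn (Gn n) (Hn (n + 1)) (Bn n) (Gn (n + 1))
  iSup_G : ⨆ n, Gn n = ⊤

/-- A subgroup `H` of `G` is *spread out* if `H ⊄ G_n` for every `n`. -/
def IteratedAmalgam.SpreadOut {G : Type u} [Group G] (S : IteratedAmalgam G)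
    (H : Subgroup G) : Prop :=
  ∀ n : ℕ, ¬ H ≤ S.Gn n

namespace Monoid.PushoutI

open CoprodI NormalWord

variable {ι : Type*} {G : ι → Type*} [∀ i, Group (G i)] {H : Type*} [Group H]
  {φ : ∀ i, H →* G i}

theorem NormalWord.Transversal.eq_one_of_mem_set_of_mem_range (d : Transversal φ) {i : ι}
    {g : G i} (hs : g ∈ d.set i) (hr : g ∈ (φ i).range) : g = 1 := by
  have h₁ := (d.compl i).equiv_snd_eq_self_of_mem_of_one_mem (φ i).range.one_mem hs
  have h₂ := (d.compl i).equiv_snd_eq_one_of_mem_of_one_mem (d.one_mem i) hr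
  simpa using congrArg Subtype.val (h₁.symm.trans h₂)

theorem Reduced.length_le_one_of_mem_range_of (hφ : ∀ i, Function.Injective (φ i))
    {w : Word G} (hw : Reduced φ w) {i : ι} (h : ofCoprodI w.prod ∈ (of (φ := φ) i).range) :
    w.toList.length ≤ 1 := by
  classical
  obtain ⟨g, hg⟩ := h
  by_cases hgφ : g ∈ (φ i).range
  · obtain ⟨b, rfl⟩ := hgφ
    have := hw.eq_empty_of_mem_range hφ ⟨b, by rw [← hg, of_apply_eq_base]⟩
    simp [this]
  · obtain ⟨d⟩ := transversal_nonempty φ hφ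
    obtain ⟨w', hw'prod, hw'fst⟩ := hw.exists_normalWord_prod_eq d
    have : w' = NormalWord.cons g NormalWord.empty (by simp [Word.fstIdx]) hgφ :=
      NormalWord.prod_injective (by
        rw [hw'prod, NormalWord.prod_cons, NormalWord.prod_empty, mul_one, hg])
    rw [← List.length_map Sigma.fst, ← hw'fst, this]
    simp

theorem reduced_neWord_toWord_iff {i j : ι} {u : NeWord G i j} :
    Reduced φ u.toWord ↔ ∀ g ∈ u.toList, g.2 ∉ (φ g.1).range :=
  Iff.rfl

theorem Reduced.neWord_inv {i j : ι} {u : NeWord G i j} (hu : Reduced φ u.toWord) :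
    Reduced φ u.inv.toWord := by
  rw [reduced_neWord_toWord_iff] at hu ⊢
  induction u with
  | singleton x _ =>
    rintro g hg
    simp only [NeWord.inv, NeWord.toList, List.mem_singleton] at hg
    subst hg
    exact fun h => hu ⟨_, x⟩ (List.mem_singleton_self _) (inv_mem_iff.mp h)
  | append w₁ hne w₂ ih₁ ih₂ =>
    simp only [NeWord.toList, List.mem_append] at hu
    simp only [NeWord.inv, NeWord.toList, List.mem_append]
    rintro g (hg | hg)
    exacts [ih₂ (fun g hg => hu g (.inr hg)) g hg, ih₁ (fun g hg => hu g (.inl hg)) g hg]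

theorem ofCoprodI_conj_notMem_range_of (hφ : ∀ i, Function.Injective (φ i)) {i j k : ι}
    {u : NeWord G i j} (hu : Reduced φ u.toWord) (hik : i ≠ k) {a : G k}
    (ha : a ∉ (φ k).range) :
    ofCoprodI (u.prod⁻¹ * CoprodI.of a * u.prod) ∉ (of (φ := φ) k).range := by
  have ha1 : a ≠ 1 := fun h => ha (h ▸ one_mem _)
  let W := (u.inv.append hik (NeWord.singleton a ha1)).append hik.symm u
  have hW : Reduced φ W.toWord := by
    have hu' := reduced_neWord_toWord_iff.mp hu.neWord_inv
    rw [reduced_neWord_toWord_iff] at hu ⊢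
    simp only [W, NeWord.toList, List.mem_append, List.mem_singleton]
    rintro g ((hg | rfl) | hg)
    exacts [hu' g hg, ha, hu g hg]
  have hprod : W.prod = u.prod⁻¹ * CoprodI.of a * u.prod := by simp [W]
  intro hmem
  have hlen := hW.length_le_one_of_mem_range_of hφ (hprod ▸ hmem)
  have h₁ := List.length_pos_of_ne_nil u.toList_ne_nil
  have h₂ := List.length_pos_of_ne_nil u.inv.toList_ne_nil
  simp only [W, NeWord.toWord, NeWord.toList, List.length_append, List.length_singleton] at hlen
  omega

theorem exists_eq_of_mul_ofCoprodI_prod (hφ : ∀ i, Function.Injective (φ i)) (k : ι)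
    (y : PushoutI φ) :
    ∃ (c : G k) (w : Word G), Reduced φ w ∧ w.fstIdx ≠ some k ∧
      y = of k c * ofCoprodI w.prod := by
  classical
  obtain ⟨d⟩ := transversal_nonempty φ hφ
  set n : NormalWord d := y • NormalWord.empty
  set p := Word.equivPair k n.toWord
  refine ⟨φ k n.head * p.head, p.tail, ?_, p.fstIdx_ne, ?_⟩
  · rintro ⟨j, g⟩ hg
    have hg' := Word.mem_of_mem_equivPair_tail _ hg
    exact fun hr => n.ne_one _ hg' (d.eq_one_of_mem_set_of_mem_range (n.normalized _ _ hg') hr)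
  · calc y = n.prod := by simp [n]
      _ = base φ n.head * ofCoprodI (Word.rcons p).prod := by
        rw [← Word.equivPair_symm, Equiv.symm_apply_apply]; rfl
      _ = of k (φ k n.head * p.head) * ofCoprodI p.tail.prod := by
        rw [Word.prod_rcons, map_mul, ofCoprodI_of, map_mul, of_apply_eq_base, mul_assoc]

theorem conj_of_notMem_range_of (hφ : ∀ i, Function.Injective (φ i)) {k : ι}
    (hN : (φ k).range.Normal) {y : PushoutI φ} (hy : y ∉ (of (φ := φ) k).range) {a : G k}
    (ha : a ∉ (φ k).range) :
    y * of k a * y⁻¹ ∉ (of (φ := φ) k).range := by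
  obtain ⟨c, w, hw, hfst, hyw⟩ := exists_eq_of_mul_ofCoprodI_prod hφ k y⁻¹
  rw [← inv_inv y, hyw] at hy ⊢
  have hwe : w ≠ Word.empty := by
    rintro rfl
    exact hy ⟨c⁻¹, by simp⟩
  obtain ⟨i, j, u, rfl⟩ := NeWord.of_word w hwe
  have hik : i ≠ k := fun h => hfst (by simp [Word.fstIdx, NeWord.toWord, h])
  have ha' : c⁻¹ * a * c ∉ (φ k).range := fun h =>
    ha (by simpa [mul_assoc] using hN.conj_mem _ h c)
  convert ofCoprodI_conj_notMem_range_of hφ hw hik ha' using 1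
  simp [NeWord.prod, mul_assoc]

end Monoid.PushoutI

namespace IsCentralAmalgamIn

open Monoid

variable {G : Type u} [Group G] {A C B D : Subgroup G}

abbrev factor (A C : Subgroup G) (i : Bool) : Type u := ↥(cond i A C)

def factorIncl (h : IsCentralAmalgamIn A C B D) : ∀ i, B →* factor A C i
  | true => Subgroup.inclusion h.B_le_A
  | false => Subgroup.inclusion h.B_le_C

theorem factorIncl_injective (h : IsCentralAmalgamIn A C B D) (i : Bool) :
    Function.Injective (h.factorIncl i) := by
  cases i
  exacts [Subgroup.inclusion_injective h.B_le_C, Subgroup.inclusion_injective h.B_le_A]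

def ofPushout (h : IsCentralAmalgamIn A C B D) : PushoutI h.factorIncl →* D :=
  PushoutI.lift (fun i => Subgroup.inclusion (by cases i; exacts [h.C_le, h.A_le]))
    (Subgroup.inclusion (h.B_le_A.trans h.A_le)) (fun i => by cases i <;> rfl)

theorem coe_ofPushout_of (h : IsCentralAmalgamIn A C B D) (i : Bool) (x : factor A C i) :
    (h.ofPushout (PushoutI.of i x) : G) = x := by
  simp [ofPushout]

theorem exists_toPushout (h : IsCentralAmalgamIn A C B D) :
    ∃ Ψ : D →* PushoutI h.factorIncl,
      Ψ.comp (Subgroup.inclusion h.A_le) = PushoutI.of (φ := h.factorIncl) true ∧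
        h.ofPushout.comp Ψ = MonoidHom.id D := by
  have hcompat : ∀ (b : G) (hb : b ∈ B),
      PushoutI.of (φ := h.factorIncl) true ⟨b, h.B_le_A hb⟩ =
        PushoutI.of (φ := h.factorIncl) false ⟨b, h.B_le_C hb⟩ := by
    intro b hb
    have h₁ := PushoutI.of_apply_eq_base h.factorIncl true ⟨b, hb⟩
    have h₂ := PushoutI.of_apply_eq_base h.factorIncl false ⟨b, hb⟩
    exact h₁.trans h₂.symm
  obtain ⟨Ψ, ⟨hΨA, hΨC⟩, -⟩ := h.isPushout _ (PushoutI.of (φ := h.factorIncl) true)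
    (PushoutI.of (φ := h.factorIncl) false) hcompat
  have hid := h.isPushout D (Subgroup.inclusion h.A_le) (Subgroup.inclusion h.C_le)
    fun _ _ => rfl
  refine ⟨Ψ, hΨA, hid.unique ?_ ⟨MonoidHom.id_comp _, MonoidHom.id_comp _⟩⟩
  constructor
  · rw [MonoidHom.comp_assoc, hΨA]
    ext x
    exact h.coe_ofPushout_of true x
  · rw [MonoidHom.comp_assoc, hΨC]
    ext x
    exact h.coe_ofPushout_of false x

theorem mem_of_conj_mem (h : IsCentralAmalgamIn A C B D) {y a : G} (hyD : y ∈ D)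
    (hyA : y ∉ A) (haA : a ∈ A) (hconj : y * a * y⁻¹ ∈ A) : a ∈ B := by
  obtain ⟨Ψ, hΨA, hΨ⟩ := h.exists_toPushout
  have hΨA' (x : A) : Ψ ⟨x, h.A_le x.2⟩ = PushoutI.of (φ := h.factorIncl) true x :=
    DFunLike.congr_fun hΨA x
  have hnormal : (h.factorIncl true).range.Normal := ⟨fun b ⟨b', hb'⟩ g => by
    refine ⟨b', Subtype.ext ?_⟩
    rw [← hb']
    simp [factorIncl, ← h.central_A b' b'.2 g g.2]⟩
  by_contra haB
  refine PushoutI.conj_of_notMem_range_of h.factorIncl_injective hnormal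
    (y := Ψ ⟨y, hyD⟩) (a := ⟨a, haA⟩) ?_ ?_ ⟨⟨_, hconj⟩, ?_⟩
  · rintro ⟨g, hg⟩
    have hy : (h.ofPushout (Ψ ⟨y, hyD⟩) : G) = y :=
      congrArg Subtype.val (DFunLike.congr_fun hΨ _)
    rw [← hg, coe_ofPushout_of] at hy
    exact hyA (hy ▸ g.2)
  · rintro ⟨b, hb⟩
    apply haB
    rw [← show (b : G) = a from congrArg Subtype.val hb]
    exact b.2
  · rw [← hΨA', ← hΨA', ← map_inv, ← map_mul, ← map_mul]
    rfl

end IsCentralAmalgamIn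

namespace IteratedAmalgam

variable {G : Type u} [Group G] (S : IteratedAmalgam G)

theorem Gn_mono : Monotone S.Gn :=
  monotone_nat_of_le_succ fun n => (S.amalgam n).A_le

theorem Bn_anti : Antitone S.Bn :=
  antitone_nat_of_succ_le S.B_antitone

theorem Bn_le_Gn (n : ℕ) : S.Bn n ≤ S.Gn n :=
  (S.amalgam n).B_le_A

theorem exists_mem_Gn (x : G) : ∃ n, x ∈ S.Gn n :=
  (Subgroup.mem_iSup_of_directed S.Gn_mono.directed_le).mp (S.iSup_G ▸ Subgroup.mem_top x)

theorem mem_Bn_of_conj_mem {n : ℕ} {x y : G} (hx : x ∈ S.Gn n) (hy : y ∉ S.Gn n)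
    (hconj : y * x * y⁻¹ ∈ S.Gn n) : x ∈ S.Bn n := by
  obtain ⟨N, hN⟩ := S.exists_mem_Gn y
  obtain ⟨m, hym, hym'⟩ := Nat.exists_not_and_succ_of_not_zero_of_exists
    (p := fun m => y ∈ S.Gn (n + m)) hy ⟨N, S.Gn_mono (Nat.le_add_left N n) hN⟩
  have hnm : n ≤ n + m := Nat.le_add_right n m
  exact S.Bn_anti hnm <|
    (S.amalgam (n + m)).mem_of_conj_mem hym' hym (S.Gn_mono hnm hx) (S.Gn_mono hnm hconj)

end IteratedAmalgam

/-- If a subgroup `H` of `G` is spread out, then its commutator subgroup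
`H' = ⁅H, H⁆` is itself spread out. -/
theorem commutator_spreadOut_of_spreadOut {G : Type u} [Group G]
    (S : IteratedAmalgam G) (H : Subgroup G) (hH : S.SpreadOut H) :
    S.SpreadOut ⁅H, H⁆ := by
  intro n hHH
  obtain ⟨h, hhH, hhn⟩ := SetLike.not_le_iff_exists.mp (hH n)
  obtain ⟨m, hm⟩ := S.exists_mem_Gn h
  have hh : h ∈ S.Gn (max n m) := S.Gn_mono (le_max_right n m) hm
  refine hH (max n m) fun y hyH => ?_
  by_contra hy
  have hconj : y * h * y⁻¹ ∈ S.Gn (max n m) := by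
    have hc : y * h * y⁻¹ * h⁻¹ ∈ S.Gn (max n m) :=
      S.Gn_mono (le_max_left n m) (hHH (Subgroup.commutator_mem_commutator hyH hhH))
    simpa using mul_mem hc hh
  exact hhn (S.Bn_le_Gn n (S.Bn_anti (le_max_left n m) (S.mem_Bn_of_conj_mem hh hy hconj)))
end
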